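/- arXiv:1505.07029 — 5 statements merged into one kernel-verified Lean document; each statement's English description precedes it below -/
import Mathlib

section
/- Let φ: ℝ → ℝ≥0 be even and differentiable, a > 0, and c(t,s) := (1/2)(√a · t - s/√a)². If Φ(t) := (a/2)t² - φ(t) is convex, then φ^{cc} = φ, i.e., with ψ := φ^c one has ψ(s) = inf_t {c(t,s) - φ(t)} and φ(t) = inf_s {c(t,s) - ψ(s)}. -/
/-!
A convex function on `ℝ` has a supporting line at every point; for `Φ = (a/2)t² - φ`, a supporting
line of slope `s` at `t` says exactly that `t` minimises `t' ↦ c(t', s) - φ(t')`, because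
`c(t, s) = (a/2)t² - t s + s²/(2a)`. Evaluating the double transform at this `s` gives
`φ^{cc}(t) ≤ φ(t)`, while `φ ≤ φ^{cc}` holds for every cost.
-/

open Set

/-- `φ^c`, valued in `EReal` because the infimum may be `-∞`; `φ^{cc}` is
`cTransformLeft c (cTransform c φ)`. -/
noncomputable def cTransform {α β : Type*} (c : α → β → ℝ) (φ : α → ℝ) (s : β) : EReal :=
  ⨅ t, ((c t s - φ t : ℝ) : EReal)

noncomputable def cTransformLeft {α β : Type*} (c : α → β → ℝ) (ψ : β → EReal) (t : α) :
    EReal :=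
  ⨅ s, (c t s : EReal) - ψ s

section CTransform

variable {α β : Type*} (c : α → β → ℝ) (φ : α → ℝ)

theorem le_cTransformLeft_cTransform (t : α) :
    (φ t : EReal) ≤ cTransformLeft c (cTransform c φ) t := by
  refine le_iInf fun s => ?_
  calc (φ t : EReal) = (c t s : EReal) - ((c t s - φ t : ℝ) : EReal) := by
        rw [← EReal.coe_sub, sub_sub_cancel]
    _ ≤ (c t s : EReal) - cTransform c φ s := EReal.sub_le_sub le_rfl (iInf_le _ t)

theorem cTransformLeft_cTransform_le {t : α} {s : β}
    (hs : ∀ t', c t s - φ t ≤ c t' s - φ t') : cTransformLeft c (cTransform c φ) t ≤ φ t := by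
  have hmin : cTransform c φ s = ((c t s - φ t : ℝ) : EReal) :=
    le_antisymm (iInf_le _ t) (le_iInf fun t' => EReal.coe_le_coe_iff.mpr (hs t'))
  calc cTransformLeft c (cTransform c φ) t ≤ (c t s : EReal) - cTransform c φ s := iInf_le _ s
    _ = φ t := by rw [hmin, ← EReal.coe_sub, sub_sub_cancel]

theorem cTransformLeft_cTransform_eq {t : α} {s : β}
    (hs : ∀ t', c t s - φ t ≤ c t' s - φ t') : cTransformLeft c (cTransform c φ) t = φ t :=
  (cTransformLeft_cTransform_le c φ hs).antisymm (le_cTransformLeft_cTransform c φ t)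

end CTransform

theorem ConvexOn.exists_forall_add_mul_sub_le {S : Set ℝ} {f : ℝ → ℝ} (hf : ConvexOn ℝ S f)
    {x : ℝ} (hx : x ∈ interior S) : ∃ m, ∀ y ∈ S, f x + m * (y - x) ≤ f y := by
  refine ⟨derivWithin f (Ioi x) x, fun y hy => ?_⟩
  rcases lt_trichotomy x y with hxy | rfl | hyx
  · have h := hf.rightDeriv_le_slope_of_mem_interior hx hy hxy
    rw [slope_def_field, le_div_iff₀ (sub_pos.mpr hxy)] at h
    linarith
  · simp
  · have h := (hf.slope_le_leftDeriv_of_mem_interior hy hx hyx).trans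
      (hf.leftDeriv_le_rightDeriv_of_mem_interior hx)
    rw [slope_def_field, div_le_iff₀ (sub_pos.mpr hyx)] at h
    linarith

theorem half_sq_sqrt_mul_sub_div_sqrt {a : ℝ} (ha : 0 < a) (t s : ℝ) :
    1 / 2 * (√a * t - s / √a) ^ 2 = a / 2 * t ^ 2 - t * s + s ^ 2 / (2 * a) := by
  have hsq : √a ^ 2 = a := Real.sq_sqrt ha.le
  field_simp
  linear_combination (√a ^ 2 * t ^ 2 * a - s ^ 2) * hsq

theorem stmt_1_general (φ : ℝ → ℝ) (a : ℝ) (ha : 0 < a)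
    (hconv : ConvexOn ℝ Set.univ (fun t => a / 2 * t ^ 2 - φ t)) :
    ∀ t : ℝ,
      (⨅ s : ℝ, (((1 / 2) * (Real.sqrt a * t - s / Real.sqrt a) ^ 2 : ℝ) : EReal)
          - ⨅ t' : ℝ,
              (((1 / 2) * (Real.sqrt a * t' - s / Real.sqrt a) ^ 2 - φ t' : ℝ) : EReal))
        = (φ t : EReal) := by
  intro t
  obtain ⟨m, hm⟩ := hconv.exists_forall_add_mul_sub_le (x := t) (by simp)
  refine cTransformLeft_cTransform_eq (fun t s => 1 / 2 * (√a * t - s / √a) ^ 2) φ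
    (s := m) fun t' => ?_
  simp only [half_sq_sqrt_mul_sub_div_sqrt ha]
  linarith [hm t' (mem_univ t')]

/-- Additive half-quadratic cost `c(t,s) = (1/2)(√a t - s/√a)²`.  If
`Φ(t) = (a/2)t² - φ(t)` is convex, then `φ^{cc} = φ`, i.e. with
`ψ(s) = inf_t {c(t,s) - φ(t)}` one has `φ(t) = inf_s {c(t,s) - ψ(s)}`. -/
theorem stmt_1 (φ : ℝ → ℝ) (a : ℝ) (ha : 0 < a) (hnn : ∀ t, 0 ≤ φ t)
    (heven : ∀ t, φ (-t) = φ t) (hdiff : Differentiable ℝ φ)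
    (hconv : ConvexOn ℝ Set.univ (fun t => a / 2 * t ^ 2 - φ t)) :
    ∀ t : ℝ,
      (⨅ s : ℝ, (((1 / 2) * (Real.sqrt a * t - s / Real.sqrt a) ^ 2 : ℝ) : EReal)
          - ⨅ t' : ℝ,
              (((1 / 2) * (Real.sqrt a * t' - s / Real.sqrt a) ^ 2 - φ t' : ℝ) : EReal))
        = (φ t : EReal) :=
  stmt_1_general φ a ha hconv
end

section
/- Let φ: ℝ → ℝ≥0 be even and differentiable and c(t,s) := t²s. If the function Φ given by Φ(t) = -φ(√t) for t ≥ 0 and Φ(t) = +∞ for t < 0 is convex (and lower semicontinuous), then φ^{cc} = φ. -/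
/-!
Put `g u := φ (√u)`, so that `φ t = g (t²)` by evenness and `t² s - φ t = u s - g u` with `u = t²`:
the `c`-transform is the concave conjugate of `g` on `[0, ∞)`. Hence `φ^{cc}(t) ≥ φ t` always, and
`φ^{cc}(t) ≤ φ t` as soon as `g` has affine majorants `g (t²) + ε + s (u - t²)` for every `ε > 0`.
For `t ≠ 0` the tangent of the concave function `g` at `t²` is such a majorant (with `ε = 0`).
At `t = 0`, where `g` need not be differentiable, take the tangent at a small `δ > 0`: its value at
`0` is `g δ - δ g'(δ) ≤ g δ - δ g'(1)`, since `g'` is antitone, and this tends to `g 0`.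
-/

open Filter Set Topology

section CTransform

variable {α β : Type*} (c : α → β → ℝ) (φ : α → ℝ)

theorem le_iInf_sub_iInf (t : α) :
    (φ t : EReal) ≤ ⨅ s, (c t s : EReal) - ⨅ t', ((c t' s - φ t' : ℝ) : EReal) := by
  refine le_iInf fun s => ?_
  calc (φ t : EReal) = (c t s : EReal) - ((c t s - φ t : ℝ) : EReal) := by
        rw [← EReal.coe_sub, sub_sub_cancel]
    _ ≤ (c t s : EReal) - ⨅ t', ((c t' s - φ t' : ℝ) : EReal) :=
        EReal.sub_le_sub le_rfl (iInf_le _ t)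

theorem iInf_sub_iInf_le_of_forall_pos {t : α}
    (h : ∀ ε > 0, ∃ s, ∀ t', c t s - φ t - ε ≤ c t' s - φ t') :
    ⨅ s, (c t s : EReal) - ⨅ t', ((c t' s - φ t' : ℝ) : EReal) ≤ φ t := by
  refine EReal.le_of_forall_lt_iff_le.mp fun z hz => ?_
  obtain ⟨s, hs⟩ := h (z - φ t) (sub_pos.mpr (EReal.coe_lt_coe_iff.mp hz))
  have hinf : ((c t s - φ t - (z - φ t) : ℝ) : EReal) ≤ ⨅ t', ((c t' s - φ t' : ℝ) : EReal) :=
    le_iInf fun t' => EReal.coe_le_coe_iff.mpr (hs t')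
  calc ⨅ s, (c t s : EReal) - ⨅ t', ((c t' s - φ t' : ℝ) : EReal)
      ≤ (c t s : EReal) - ((c t s - φ t - (z - φ t) : ℝ) : EReal) :=
        iInf_le_of_le s (EReal.sub_le_sub le_rfl hinf)
    _ = z := by rw [← EReal.coe_sub]; congr 1; ring

end CTransform

theorem ConcaveOn.le_tangent_of_hasDerivAt {S : Set ℝ} {f : ℝ → ℝ} {x y f' : ℝ}
    (hf : ConcaveOn ℝ S f) (hx : x ∈ S) (hy : y ∈ S) (hderiv : HasDerivAt f f' x) :
    f y ≤ f x + f' * (y - x) := by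
  rcases lt_trichotomy y x with hyx | rfl | hxy
  · have hslope := hf.le_slope_of_hasDerivAt hy hx hyx hderiv
    rw [slope_def_field, le_div_iff₀ (sub_pos.mpr hyx)] at hslope
    linarith
  · simp
  · have hslope := hf.slope_le_of_hasDerivAt hx hy hxy hderiv
    rw [slope_def_field, div_le_iff₀ (sub_pos.mpr hxy)] at hslope
    linarith

theorem ConcaveOn.exists_affine_majorant_Ici {g : ℝ → ℝ} (hg : ConcaveOn ℝ (Ici 0) g)
    (hdiff : ∀ u > 0, DifferentiableAt ℝ g u) (hcont : ContinuousWithinAt g (Ici 0) 0)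
    {u₀ ε : ℝ} (hu₀ : 0 ≤ u₀) (hε : 0 < ε) :
    ∃ s, ∀ u ≥ 0, g u ≤ g u₀ + ε + s * (u - u₀) := by
  have tangent : ∀ δ > 0, ∀ u ≥ 0, g u ≤ g δ + deriv g δ * (u - δ) := fun δ hδ u hu =>
    hg.le_tangent_of_hasDerivAt hδ.le hu (hdiff δ hδ).hasDerivAt
  rcases hu₀.lt_or_eq with hpos | rfl
  · exact ⟨deriv g u₀, fun u hu => by linarith [tangent u₀ hpos u hu]⟩
  have hlim : Tendsto (fun δ => g δ - δ * deriv g 1) (𝓝[>] 0) (𝓝 (g 0)) := by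
    have := (hcont.tendsto.mono_left (nhdsWithin_mono _ Ioi_subset_Ici_self)).sub
      ((tendsto_id.mono_left nhdsWithin_le_nhds).mul_const (deriv g 1))
    simpa using this
  obtain ⟨δ, hδε, hδ⟩ :=
    ((hlim.eventually (gt_mem_nhds (lt_add_of_pos_right _ hε))).and (Ioo_mem_nhdsGT one_pos)).exists
  have hderiv_antitone : deriv g 1 ≤ deriv g δ :=
    (hg.subset Ioi_subset_Ici_self (convex_Ioi 0)).antitoneOn_deriv hdiff hδ.1
      (zero_lt_one' ℝ) hδ.2.le
  refine ⟨deriv g δ, fun u hu => ?_⟩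
  have := tangent δ hδ.1 u hu
  nlinarith [mul_le_mul_of_nonneg_left hderiv_antitone hδ.1.le]

theorem Function.Even.apply_sqrt_sq {φ : ℝ → ℝ} (heven : φ.Even) (t : ℝ) :
    φ (Real.sqrt (t ^ 2)) = φ t := by
  rw [Real.sqrt_sq_eq_abs]
  rcases abs_choice t with h | h <;> rw [h]
  exact heven t

theorem stmt_2_general (φ : ℝ → ℝ) (heven : ∀ t, φ (-t) = φ t)
    (hdiff : Differentiable ℝ φ)
    (hconc : ConcaveOn ℝ (Set.Ici 0) (fun t => φ (Real.sqrt t))) :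
    ∀ t : ℝ,
      (⨅ s : ℝ, ((t ^ 2 * s : ℝ) : EReal)
          - ⨅ t' : ℝ, ((t' ^ 2 * s - φ t' : ℝ) : EReal))
        = (φ t : EReal) := by
  intro t
  have hsqrt_diff : ∀ u > 0, DifferentiableAt ℝ (fun u => φ (Real.sqrt u)) u := fun u hu =>
    (hdiff _).comp u (Real.hasDerivAt_sqrt hu.ne').differentiableAt
  have hsqrt_cont : ContinuousWithinAt (fun u => φ (Real.sqrt u)) (Ici 0) 0 :=
    (hdiff.continuous.comp Real.continuous_sqrt).continuousWithinAt
  refine le_antisymm (iInf_sub_iInf_le_of_forall_pos (fun t s => t ^ 2 * s) φ fun ε hε => ?_)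
    (le_iInf_sub_iInf (fun t s => t ^ 2 * s) φ t)
  obtain ⟨s, hs⟩ := hconc.exists_affine_majorant_Ici hsqrt_diff hsqrt_cont (sq_nonneg t) hε
  refine ⟨s, fun t' => ?_⟩
  have := hs (t' ^ 2) (sq_nonneg t')
  simp only [Function.Even.apply_sqrt_sq heven] at this
  linarith

/-- Multiplicative half-quadratic cost `c(t,s) = t²s`.  If the extended function
`Φ(t) = -φ(√t)` for `t ≥ 0`, `Φ(t) = +∞` for `t < 0` is convex (equivalently,
`t ↦ φ(√t)` is concave on `[0,∞)`; lower semicontinuity is automatic), then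
`φ^{cc} = φ` (infima taken in the extended reals). -/
theorem stmt_2 (φ : ℝ → ℝ) (hnn : ∀ t, 0 ≤ φ t) (heven : ∀ t, φ (-t) = φ t)
    (hdiff : Differentiable ℝ φ)
    (hconc : ConcaveOn ℝ (Set.Ici 0) (fun t => φ (Real.sqrt t))) :
    ∀ t : ℝ,
      (⨅ s : ℝ, ((t ^ 2 * s : ℝ) : EReal)
          - ⨅ t' : ℝ, ((t' ^ 2 * s - φ t' : ℝ) : EReal))
        = (φ t : EReal) :=
  stmt_2_general φ heven hdiff hconc
end

section
/- Let φ: ℝ → ℝ≥0 be even and differentiable with t ↦ φ(√t) concave on (0,∞), φ'(t) ≥ 0 for t ≥ 0, lim_{t→∞} φ(t)/t² = 0, and suppose φ''(0+) := lim_{t→0+} φ'(t)/t exists. Then for every t ≥ 0, the infimum inf_{s} {t²s - φ^c(s)} is attained at s(t) = φ'(t)/(2t) for t > 0 and at s(0) = φ''(0+)/2, and for these pairs φ(t) + φ^c(s(t)) = t² s(t). -/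
open Filter

private lemma key_ineq (φ : ℝ → ℝ) (L : ℝ) (heven : ∀ t, φ (-t) = φ t)
    (hdiff : Differentiable ℝ φ)
    (hconc : ConcaveOn ℝ (Set.Ioi 0) (fun t => φ (Real.sqrt t)))
    (hL : Tendsto (fun t => deriv φ t / t) (nhdsWithin 0 (Set.Ioi 0)) (nhds L)) :
    ∀ t : ℝ, 0 ≤ t → ∀ τ : ℝ,
      φ τ ≤ φ t + (if 0 < t then deriv φ t / (2 * t) else L / 2) * (τ ^ 2 - t ^ 2) := by
  -- derivative of Φ(u) = φ(√u)
  have hΦd : ∀ u : ℝ, 0 < u → HasDerivAt (fun v => φ (Real.sqrt v))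
      (deriv φ (Real.sqrt u) * (1 / (2 * Real.sqrt u))) u := by
    intro u hu
    exact ((hdiff (Real.sqrt u)).hasDerivAt).comp u (Real.hasDerivAt_sqrt hu.ne')
  -- tangent line inequality
  have tangent : ∀ u : ℝ, 0 < u → ∀ v : ℝ, 0 < v →
      φ (Real.sqrt v) ≤ φ (Real.sqrt u)
        + (deriv φ (Real.sqrt u) * (1 / (2 * Real.sqrt u))) * (v - u) := by
    intro u hu v hv
    rcases lt_trichotomy u v with h | rfl | h
    · have := hconc.slope_le_of_hasDerivAt (Set.mem_Ioi.mpr hu) (Set.mem_Ioi.mpr hv) h (hΦd u hu)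
      rw [slope_def_field] at this
      have h2 := (div_le_iff₀ (by linarith : (0:ℝ) < v - u)).mp this
      nlinarith
    · simp
    · have := hconc.le_slope_of_hasDerivAt (Set.mem_Ioi.mpr hv) (Set.mem_Ioi.mpr hu) h (hΦd u hu)
      rw [slope_def_field] at this
      have h2 := (le_div_iff₀ (by linarith : (0:ℝ) < u - v)).mp this
      nlinarith
  have hsq2 : ∀ x : ℝ, φ (Real.sqrt (x ^ 2)) = φ x := by
    intro x
    rw [Real.sqrt_sq_eq_abs]
    rcases abs_choice x with h | h
    · rw [h]
    · rw [h, heven]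
  -- continuity of Φ at 0 from the right
  have hlim0 : Tendsto (fun v => φ (Real.sqrt v)) (nhdsWithin 0 (Set.Ioi 0)) (nhds (φ 0)) := by
    have : ContinuousAt (fun v => φ (Real.sqrt v)) 0 :=
      (hdiff.continuous.comp Real.continuous_sqrt).continuousAt
    simpa [Real.sqrt_zero] using this.tendsto.mono_left nhdsWithin_le_nhds
  -- limit of Φ' at 0 from the right
  have hsqmap : Tendsto Real.sqrt (nhdsWithin 0 (Set.Ioi 0)) (nhdsWithin 0 (Set.Ioi 0)) := by
    apply tendsto_nhdsWithin_of_tendsto_nhds_of_eventually_within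
    · simpa [Real.sqrt_zero] using
        (Real.continuous_sqrt.continuousAt (x := 0)).tendsto.mono_left nhdsWithin_le_nhds
    · filter_upwards [self_mem_nhdsWithin] with x hx
      exact Real.sqrt_pos.mpr hx
  have hΦ'lim : Tendsto (fun u => deriv φ (Real.sqrt u) * (1 / (2 * Real.sqrt u)))
      (nhdsWithin 0 (Set.Ioi 0)) (nhds (L / 2)) := by
    have h1 : Tendsto (fun u => deriv φ (Real.sqrt u) / Real.sqrt u)
        (nhdsWithin 0 (Set.Ioi 0)) (nhds L) := hL.comp hsqmap
    have h2 : Tendsto (fun u => (1 / 2 : ℝ) * (deriv φ (Real.sqrt u) / Real.sqrt u))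
        (nhdsWithin 0 (Set.Ioi 0)) (nhds (L / 2)) := by
      have h3 := h1.const_mul (1 / 2 : ℝ)
      rwa [show (1 / 2 : ℝ) * L = L / 2 by ring] at h3
    refine h2.congr' ?_
    filter_upwards [self_mem_nhdsWithin] with u hu
    have hne : Real.sqrt u ≠ 0 := (Real.sqrt_pos.mpr hu).ne'
    field_simp
  intro t ht τ
  by_cases htpos : 0 < t
  · rw [if_pos htpos]
    have hst : Real.sqrt (t ^ 2) = t := by
      rw [Real.sqrt_sq_eq_abs, abs_of_nonneg ht]
    have htang : ∀ v : ℝ, 0 < v →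
        φ (Real.sqrt v) ≤ φ t + (deriv φ t / (2 * t)) * (v - t ^ 2) := by
      intro v hv
      have h := tangent (t ^ 2) (by positivity) v hv
      rw [hst] at h
      rw [show deriv φ t / (2 * t) = deriv φ t * (1 / (2 * t)) from by ring]
      exact h
    by_cases hτ : τ = 0
    · subst hτ
      -- limit v → 0+ of the tangent inequality
      have hrhs : Tendsto (fun v => φ t + (deriv φ t / (2 * t)) * (v - t ^ 2))
          (nhdsWithin 0 (Set.Ioi 0)) (nhds (φ t + (deriv φ t / (2 * t)) * (0 - t ^ 2))) := by
        apply Tendsto.mono_left _ nhdsWithin_le_nhds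
        exact (Continuous.tendsto (by continuity) 0)
      have := le_of_tendsto_of_tendsto hlim0 hrhs
        (by filter_upwards [self_mem_nhdsWithin] with v hv using htang v hv)
      simpa using this
    · have hv : 0 < τ ^ 2 := by positivity
      have := htang (τ ^ 2) hv
      rw [hsq2] at this
      linarith
  · have ht0 : t = 0 := le_antisymm (not_lt.mp htpos) ht
    subst ht0
    rw [if_neg htpos]
    by_cases hτ : τ = 0
    · subst hτ; simp
    · have hv : 0 < τ ^ 2 := by positivity
      -- limit u → 0+ of the tangent inequality at v = τ²
      have hrhs : Tendsto (fun u => φ (Real.sqrt u)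
          + (deriv φ (Real.sqrt u) * (1 / (2 * Real.sqrt u))) * (τ ^ 2 - u))
          (nhdsWithin 0 (Set.Ioi 0)) (nhds (φ 0 + (L / 2) * (τ ^ 2 - 0))) := by
        exact hlim0.add (hΦ'lim.mul ((tendsto_const_nhds.sub
          (tendsto_id.mono_left nhdsWithin_le_nhds))))
      have hle : φ τ ≤ φ 0 + (L / 2) * (τ ^ 2 - 0) := by
        refine ge_of_tendsto hrhs ?_
        filter_upwards [self_mem_nhdsWithin] with u hu
        have := tangent u hu (τ ^ 2) hv
        rw [hsq2] at this
        exact this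
      simpa using hle

/-- Multiplicative half-quadratic minimization: under concavity of `t ↦ φ(√t)` on
`(0,∞)`, `φ' ≥ 0` on `[0,∞)`, `φ(t)/t² → 0` and existence of
`φ''(0+) = lim_{t→0+} φ'(t)/t = L`, for each `t ≥ 0` the infimum
`inf_s {t²s - φ^c(s)}` is attained at `s(t) = φ'(t)/(2t)` (`t>0`), `s(0) = L/2`,
and for these pairs `φ(t) + φ^c(s(t)) = t² s(t)`. -/
theorem stmt_3 (φ : ℝ → ℝ) (L : ℝ) (hnn : ∀ t, 0 ≤ φ t) (heven : ∀ t, φ (-t) = φ t)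
    (hdiff : Differentiable ℝ φ)
    (hconc : ConcaveOn ℝ (Set.Ioi 0) (fun t => φ (Real.sqrt t)))
    (hmono : ∀ t, 0 ≤ t → 0 ≤ deriv φ t)
    (hgrow : Tendsto (fun t => φ t / t ^ 2) atTop (nhds 0))
    (hL : Tendsto (fun t => deriv φ t / t) (nhdsWithin 0 (Set.Ioi 0)) (nhds L)) :
    ∀ t : ℝ, 0 ≤ t →
      let s : ℝ := if 0 < t then deriv φ t / (2 * t) else L / 2
      let ψ : ℝ → EReal := fun σ => ⨅ τ : ℝ, ((τ ^ 2 * σ - φ τ : ℝ) : EReal)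
      (((t ^ 2 * s : ℝ) : EReal) - ψ s
          = ⨅ σ : ℝ, ((t ^ 2 * σ : ℝ) : EReal) - ψ σ) ∧
        (φ t : EReal) + ψ s = ((t ^ 2 * s : ℝ) : EReal) := by
  intro t ht s ψ
  have key : ∀ τ : ℝ, φ τ ≤ φ t + s * (τ ^ 2 - t ^ 2) :=
    key_ineq φ L heven hdiff hconc hL t ht
  have hψs : ψ s = ((t ^ 2 * s - φ t : ℝ) : EReal) := by
    refine le_antisymm (iInf_le _ t) (le_iInf fun τ => ?_)
    rw [EReal.coe_le_coe_iff]
    nlinarith [key τ]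
  have hB : (φ t : EReal) + ψ s = ((t ^ 2 * s : ℝ) : EReal) := by
    rw [hψs, ← EReal.coe_add]
    norm_num
  refine ⟨?_, hB⟩
  have hA' : (⨅ σ : ℝ, ((t ^ 2 * σ : ℝ) : EReal) - ψ σ) = (φ t : EReal) := by
    refine le_antisymm ?_ (le_iInf fun σ => ?_)
    · calc (⨅ σ : ℝ, ((t ^ 2 * σ : ℝ) : EReal) - ψ σ)
          ≤ ((t ^ 2 * s : ℝ) : EReal) - ψ s := iInf_le _ s
        _ = (φ t : EReal) := by rw [hψs, ← EReal.coe_sub]; norm_num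
    · have h1 : ψ σ ≤ ((t ^ 2 * σ - φ t : ℝ) : EReal) := iInf_le _ t
      calc (φ t : EReal)
          = ((t ^ 2 * σ : ℝ) : EReal) - ((t ^ 2 * σ - φ t : ℝ) : EReal) := by
            rw [← EReal.coe_sub]; norm_num
        _ ≤ ((t ^ 2 * σ : ℝ) : EReal) - ψ σ := EReal.sub_le_sub le_rfl h1
  rw [hψs, ← EReal.coe_sub, hA']
  norm_num
end

section
/- Let φ: ℝ → ℝ≥0 be even and differentiable, a > 0, with Φ(t) := (a/2)t² - φ(t) convex and limsup_{t→∞} φ(t)/t² < a/2. Then for each s ∈ ℝ, the infimum inf_t {(1/2)(√a t - s/√a)² - φ(t)} is attained, and the minimizing pair satisfies s = a t - φ'(t); moreover φ(t) + φ^c(s(t)) = (1/2)(√a t - s(t)/√a)² with s(t) = a t - φ'(t). -/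
/-!
Expanding the square, `(1/2)(√a t - s/√a)² - φ t = Φ t - s t + s²/(2a)`, so minimizing the cost
in `t` is minimizing `Φ t - s t`. Since `Φ` is convex and differentiable, `t` is a global
minimizer of `Φ - s·` exactly when `s = Φ' t = a t - φ' t`; this gives both the optimality
condition and the value of `φ^c (a t - φ' t)`. A minimizer exists because the growth bound makes
`Φ - s·` coercive at `+∞`, and evenness of `φ` transfers this to `-∞`.
-/

open Filter Set

lemma ConvexOn.add_deriv_mul_sub_le {f : ℝ → ℝ} (hf : ConvexOn ℝ univ f) {x : ℝ}
    (hfx : DifferentiableAt ℝ f x) (y : ℝ) : f x + deriv f x * (y - x) ≤ f y := by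
  rcases lt_trichotomy x y with hxy | rfl | hyx
  · have := hf.deriv_le_slope (mem_univ x) (mem_univ y) hxy hfx
    rw [slope_def_field, le_div_iff₀ (sub_pos.2 hxy)] at this
    linarith
  · simp
  · have := hf.slope_le_deriv (mem_univ y) (mem_univ x) hyx hfx
    rw [slope_def_field, div_le_iff₀ (sub_pos.2 hyx)] at this
    linarith

lemma ConvexOn.forall_sub_mul_le_iff_deriv_eq {f : ℝ → ℝ} (hf : ConvexOn ℝ univ f) {x : ℝ}
    (hfx : DifferentiableAt ℝ f x) (s : ℝ) :
    (∀ y, f x - s * x ≤ f y - s * y) ↔ deriv f x = s := by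
  constructor
  · intro hmin
    have hloc : IsLocalMin (fun y => f y - s * y) x := Eventually.of_forall hmin
    have hderiv : HasDerivAt (fun y => f y - s * y) (deriv f x - s) x := by
      simpa using hfx.hasDerivAt.fun_sub ((hasDerivAt_id x).const_mul s)
    exact sub_eq_zero.1 (hloc.hasDerivAt_eq_zero hderiv)
  · rintro rfl y
    linarith [hf.add_deriv_mul_sub_le hfx y]

lemma isBoundedUnder_le_div_sq_of_le_quadratic {φ : ℝ → ℝ} {c d e : ℝ}
    (h : ∀ t, φ t ≤ c * t ^ 2 + d * t + e) :
    IsBoundedUnder (· ≤ ·) atTop (fun t => φ t / t ^ 2) := by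
  refine ⟨c + |d| + |e|, eventually_map.2 ?_⟩
  filter_upwards [eventually_ge_atTop (1 : ℝ)] with t ht
  have ht2 : t ≤ t ^ 2 := by nlinarith
  rw [div_le_iff₀ (by positivity)]
  nlinarith [h t, le_abs_self d, le_abs_self e, abs_nonneg d, abs_nonneg e]

lemma tendsto_mul_sq_sub_sub_mul_atTop {φ : ℝ → ℝ} {c : ℝ}
    (hbdd : IsBoundedUnder (· ≤ ·) atTop (fun t => φ t / t ^ 2))
    (hgrow : limsup (fun t => φ t / t ^ 2) atTop < c) (s : ℝ) :
    Tendsto (fun t => c * t ^ 2 - φ t - s * t) atTop atTop := by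
  obtain ⟨b, hb, hbc⟩ := exists_between hgrow
  have hcb : 0 < c - b := sub_pos.2 hbc
  refine tendsto_atTop_mono' atTop ?_ tendsto_id
  filter_upwards [eventually_lt_of_limsup_lt hb hbdd, eventually_ge_atTop (1 : ℝ),
    eventually_ge_atTop ((|s| + 1) / (c - b))] with t hφ ht1 hts
  rw [div_lt_iff₀ (by positivity)] at hφ
  rw [div_le_iff₀ hcb] at hts
  show t ≤ _
  nlinarith [le_abs_self s]

lemma Continuous.exists_forall_le_of_tendsto_atBot_atTop {g : ℝ → ℝ} (hg : Continuous g)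
    (hbot : Tendsto g atBot atTop) (htop : Tendsto g atTop atTop) : ∃ x, ∀ y, g x ≤ g y :=
  hg.exists_forall_le (by rw [cocompact_eq_atBot_atTop]; exact tendsto_sup.2 ⟨hbot, htop⟩)

section HalfQuadratic

variable {φ : ℝ → ℝ} {a : ℝ}

lemma half_mul_sq_sqrt_mul_sub_div_sqrt (ha : 0 < a) (s t : ℝ) :
    1 / 2 * (Real.sqrt a * t - s / Real.sqrt a) ^ 2 = a / 2 * t ^ 2 - s * t + s ^ 2 / (2 * a) := by
  have hsqrt : Real.sqrt a ^ 2 = a := Real.sq_sqrt ha.le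
  have hsqrt0 : Real.sqrt a ≠ 0 := (Real.sqrt_pos.2 ha).ne'
  field_simp
  rw [hsqrt]
  ring

lemma hasDerivAt_half_mul_sq_sub (hdiff : Differentiable ℝ φ) (a t : ℝ) :
    HasDerivAt (fun t => a / 2 * t ^ 2 - φ t) (a * t - deriv φ t) t := by
  have hsq : HasDerivAt (fun t : ℝ => a / 2 * t ^ 2) (a * t) t := by
    exact ((hasDerivAt_pow 2 t).const_mul (a / 2)).congr_deriv (by push_cast; ring)
  exact hsq.sub (hdiff t).hasDerivAt

lemma exists_forall_half_mul_sq_sub_sub_mul_le (hdiff : Differentiable ℝ φ)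
    (heven : ∀ t, φ (-t) = φ t) (hconv : ConvexOn ℝ univ (fun t => a / 2 * t ^ 2 - φ t))
    (hgrow : limsup (fun t => φ t / t ^ 2) atTop < a / 2) (s : ℝ) :
    ∃ t, ∀ t', a / 2 * t ^ 2 - φ t - s * t ≤ a / 2 * t' ^ 2 - φ t' - s * t' := by
  have hbdd : IsBoundedUnder (· ≤ ·) atTop (fun t => φ t / t ^ 2) := by
    have hΦ₀ := hasDerivAt_half_mul_sq_sub hdiff a 0
    refine isBoundedUnder_le_div_sq_of_le_quadratic (c := a / 2) (d := deriv φ 0) (e := φ 0)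
      fun t => ?_
    have := hconv.add_deriv_mul_sub_le hΦ₀.differentiableAt t
    rw [hΦ₀.deriv] at this
    linarith
  have hcont : Continuous fun t => a / 2 * t ^ 2 - φ t - s * t := by
    have := hdiff.continuous
    fun_prop
  refine hcont.exists_forall_le_of_tendsto_atBot_atTop ?_
    (tendsto_mul_sq_sub_sub_mul_atTop hbdd hgrow s)
  refine ((tendsto_mul_sq_sub_sub_mul_atTop hbdd hgrow (-s)).comp tendsto_neg_atBot_atTop).congr
    fun t => ?_
  simp only [Function.comp_apply, heven, neg_sq]
  ring

end HalfQuadratic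

theorem stmt_5_general (φ : ℝ → ℝ) (a : ℝ) (ha : 0 < a)
    (heven : ∀ t, φ (-t) = φ t) (hdiff : Differentiable ℝ φ)
    (hconv : ConvexOn ℝ Set.univ (fun t => a / 2 * t ^ 2 - φ t))
    (hgrow : Filter.limsup (fun t => φ t / t ^ 2) Filter.atTop < a / 2) :
    (∀ s : ℝ, ∃ t : ℝ,
        (∀ t' : ℝ,
          (1 / 2) * (Real.sqrt a * t - s / Real.sqrt a) ^ 2 - φ t
            ≤ (1 / 2) * (Real.sqrt a * t' - s / Real.sqrt a) ^ 2 - φ t')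
        ∧ s = a * t - deriv φ t) ∧
    ∀ t : ℝ,
      φ t + sInf {y : ℝ | ∃ t' : ℝ,
          y = (1 / 2) * (Real.sqrt a * t' - (a * t - deriv φ t) / Real.sqrt a) ^ 2 - φ t'}
        = (1 / 2) * (Real.sqrt a * t - (a * t - deriv φ t) / Real.sqrt a) ^ 2 := by
  have hΦ := hasDerivAt_half_mul_sq_sub hdiff a
  have hmin_iff := fun t => hconv.forall_sub_mul_le_iff_deriv_eq (hΦ t).differentiableAt
  simp only [half_mul_sq_sqrt_mul_sub_div_sqrt ha, (hΦ _).deriv] at hmin_iff ⊢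
  refine ⟨fun s => ?_, fun t => ?_⟩
  · obtain ⟨t, ht⟩ := exists_forall_half_mul_sq_sub_sub_mul_le hdiff heven hconv hgrow s
    exact ⟨t, fun t' => by linarith [ht t'], ((hmin_iff t s).1 ht).symm⟩
  · have hleast : IsLeast {y : ℝ | ∃ t' : ℝ, y = a / 2 * t' ^ 2 - (a * t - deriv φ t) * t'
        + (a * t - deriv φ t) ^ 2 / (2 * a) - φ t'}
        (a / 2 * t ^ 2 - (a * t - deriv φ t) * t + (a * t - deriv φ t) ^ 2 / (2 * a) - φ t) :=
      ⟨⟨t, rfl⟩, by rintro y ⟨t', rfl⟩; linarith [(hmin_iff t _).2 rfl t']⟩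
    rw [hleast.csInf_eq]
    ring

/-- Additive half-quadratic minimization: with `a > 0`, `Φ(t) = (a/2)t² - φ(t)`
convex and `limsup_{t→∞} φ(t)/t² < a/2`, for each `s` the infimum
`inf_t {(1/2)(√a t - s/√a)² - φ(t)}` is attained, the minimizer satisfies
`s = a t - φ'(t)`, and `φ(t) + φ^c(s(t)) = c(t, s(t))` with `s(t) = a t - φ'(t)`. -/
theorem stmt_5 (φ : ℝ → ℝ) (a : ℝ) (ha : 0 < a) (hnn : ∀ t, 0 ≤ φ t)
    (heven : ∀ t, φ (-t) = φ t) (hdiff : Differentiable ℝ φ)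
    (hconv : ConvexOn ℝ Set.univ (fun t => a / 2 * t ^ 2 - φ t))
    (hgrow : Filter.limsup (fun t => φ t / t ^ 2) Filter.atTop < a / 2) :
    (∀ s : ℝ, ∃ t : ℝ,
        (∀ t' : ℝ,
          (1 / 2) * (Real.sqrt a * t - s / Real.sqrt a) ^ 2 - φ t
            ≤ (1 / 2) * (Real.sqrt a * t' - s / Real.sqrt a) ^ 2 - φ t')
        ∧ s = a * t - deriv φ t) ∧
    ∀ t : ℝ,
      φ t + sInf {y : ℝ | ∃ t' : ℝ,
          y = (1 / 2) * (Real.sqrt a * t' - (a * t - deriv φ t) / Real.sqrt a) ^ 2 - φ t'}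
        = (1 / 2) * (Real.sqrt a * t - (a * t - deriv φ t) / Real.sqrt a) ^ 2 :=
  stmt_5_general φ a ha heven hdiff hconv hgrow
end

section
/- Let 𝒥: X × Y → ℝ be continuous on a metric space X × Y, such that for every u the minimizer v(u) = argmin_v 𝒥(u,·) is unique and depends continuously on u, and for every v the minimizer argmin_u 𝒥(·,v) is unique and the map T(u) := argmin_z 𝒥(z, v(u)) is continuous. If the alternating minimization sequence (u^{(k)}, v^{(k)}) has a subsequence converging to (ū, v̄), then v̄ = v(ū) and ū = argmin_u 𝒥(u, v(ū)), i.e., (ū, v̄) is a fixed point of the alternating scheme. -/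
open Filter

/-- Subsequential limits of the alternating minimization scheme are fixed
points: if `(u⁽ᵏʲ⁾, v⁽ᵏʲ⁾) → (ū, v̄)`, then `v̄ = argmin_v 𝒥(ū, ·)` and
`ū = argmin_u 𝒥(u, v̄)`. -/
theorem stmt_15 {X Y : Type*} [MetricSpace X] [MetricSpace Y]
    (𝒥 : X × Y → ℝ) (hcont : Continuous 𝒥)
    (vmin : X → Y) (hvmin : ∀ x y, 𝒥 (x, vmin x) ≤ 𝒥 (x, y))
    (hvuniq : ∀ x y, (∀ y', 𝒥 (x, y) ≤ 𝒥 (x, y')) → y = vmin x)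
    (hvcont : Continuous vmin)
    (T : X → X) (hT : ∀ x z, 𝒥 (T x, vmin x) ≤ 𝒥 (z, vmin x))
    (huuniq : ∀ (y : Y) (x x' : X),
      (∀ z, 𝒥 (x, y) ≤ 𝒥 (z, y)) → (∀ z, 𝒥 (x', y) ≤ 𝒥 (z, y)) → x = x')
    (hTcont : Continuous T)
    (u : ℕ → X) (v : ℕ → Y)
    (hstep : ∀ k, v (k + 1) = vmin (u k) ∧ u (k + 1) = T (u k))
    (ubar : X) (vbar : Y) (ks : ℕ → ℕ) (hks : StrictMono ks)
    (hsub : Tendsto (fun j => (u (ks j), v (ks j))) atTop (nhds (ubar, vbar))) :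
    vbar = vmin ubar ∧ ∀ x, 𝒥 (ubar, vmin ubar) ≤ 𝒥 (x, vmin ubar) := by
  set a : ℕ → ℝ := fun k => 𝒥 (u k, v k) with ha
  have hanti : Antitone a := by
    apply antitone_nat_of_succ_le
    intro k
    have h1 := (hstep k).1
    have h2 := (hstep k).2
    calc a (k + 1) = 𝒥 (T (u k), vmin (u k)) := by rw [ha]; simp [h1, h2]
      _ ≤ 𝒥 (u k, vmin (u k)) := hT (u k) (u k)
      _ ≤ 𝒥 (u k, v k) := hvmin (u k) (v k)
  have hu : Tendsto (fun j => u (ks j)) atTop (nhds ubar) :=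
    (continuous_fst.tendsto _).comp hsub
  have hb : Tendsto (fun j => a (ks j)) atTop (nhds (𝒥 (ubar, vbar))) :=
    (hcont.tendsto _).comp hsub
  -- limit of the shifted subsequence, by squeeze
  have hks' : Tendsto ks atTop atTop := hks.tendsto_atTop
  have hb' : Tendsto (fun j => a (ks (j + 1))) atTop (nhds (𝒥 (ubar, vbar))) :=
    hb.comp (tendsto_add_atTop_nat 1)
  have hsq : Tendsto (fun j => a (ks j + 1)) atTop (nhds (𝒥 (ubar, vbar))) := by
    refine tendsto_of_tendsto_of_tendsto_of_le_of_le hb' hb ?_ ?_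
    · intro j
      exact hanti (Nat.succ_le_of_lt (hks (Nat.lt_succ_self j)))
    · intro j
      exact hanti (Nat.le_succ _)
  have heq : (fun j => a (ks j + 1)) = fun j => 𝒥 (T (u (ks j)), vmin (u (ks j))) := by
    funext j
    have h1 := (hstep (ks j)).1
    have h2 := (hstep (ks j)).2
    rw [ha]; simp [h1, h2]
  have hlim2 : Tendsto (fun j => a (ks j + 1)) atTop
      (nhds (𝒥 (T ubar, vmin ubar))) := by
    rw [heq]
    exact (hcont.tendsto _).comp (((hTcont.tendsto _).comp hu).prodMk_nhds
      ((hvcont.tendsto _).comp hu))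
  have hkey : 𝒥 (T ubar, vmin ubar) = 𝒥 (ubar, vbar) :=
    tendsto_nhds_unique hlim2 hsq
  -- chain of inequalities collapses
  have h3 : 𝒥 (T ubar, vmin ubar) ≤ 𝒥 (ubar, vmin ubar) := hT ubar ubar
  have h4 : 𝒥 (ubar, vmin ubar) ≤ 𝒥 (ubar, vbar) := hvmin ubar vbar
  have h5 : 𝒥 (ubar, vmin ubar) = 𝒥 (ubar, vbar) := le_antisymm h4 (hkey ▸ h3)
  have h6 : 𝒥 (T ubar, vmin ubar) = 𝒥 (ubar, vmin ubar) := by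
    rw [hkey, h5]
  constructor
  · exact hvuniq ubar vbar (fun y' => by rw [← h5]; exact hvmin ubar y')
  · intro x
    rw [← h6]
    exact hT ubar x
end
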